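/- Let x_0 ∈ ℝ^d, α ≥ 0, and let f : ℝ^d → ℝ satisfy the Jaffard regularity condition at x_0: there exist a constant C_f ≥ 0 and a polynomial p on ℝ^d of total degree at most ⌊α⌋ such that |f(x) − p(x)| ≤ C_f ‖x − x_0‖^α for all x in a set τ ⊆ ℝ^d containing x_0. Let x_1, …, x_m ∈ τ, and let ω ∈ ℝ^m with ‖ω‖_2 ≤ 1 have vanishing moments of order q+1 with q ≥ ⌊α⌋, i.e., Σ_{i=1}^m ω_i r(x_i) = 0 for every polynomial r of total degree at most q. Then |Σ_{i=1}^m ω_i f(x_i)| ≤ C_f · (diam τ)^α · √m, where diam τ = sup_{y,z ∈ τ} ‖y − z‖. -/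
import Mathlib


/-- Samplet coefficients of a function that is Jaffard-regular of order `α` at
`x₀` decay like `C_f (diam τ)^α √m`, provided the coefficient vector has unit
Euclidean norm at most one and vanishing moments of order `q+1` with
`q ≥ ⌊α⌋`. -/
theorem samplet_coefficient_decay_jaffard
    {d m q : ℕ} (α : ℝ) (hα : 0 ≤ α)
    (τ : Set (EuclideanSpace ℝ (Fin d))) (hτ : Bornology.IsBounded τ)
    (x₀ : EuclideanSpace ℝ (Fin d)) (hx₀ : x₀ ∈ τ)
    (f : EuclideanSpace ℝ (Fin d) → ℝ) (C_f : ℝ) (hC : 0 ≤ C_f)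
    (p : MvPolynomial (Fin d) ℝ) (hpdeg : p.totalDegree ≤ ⌊α⌋₊)
    (hjaffard : ∀ y ∈ τ,
      |f y - MvPolynomial.eval (fun j => y j) p| ≤ C_f * ‖y - x₀‖ ^ α)
    (x : Fin m → EuclideanSpace ℝ (Fin d)) (hx : ∀ i, x i ∈ τ)
    (ω : Fin m → ℝ) (hω : Real.sqrt (∑ i, ω i ^ 2) ≤ 1)
    (hq : ⌊α⌋₊ ≤ q)
    (hvm : ∀ r : MvPolynomial (Fin d) ℝ, r.totalDegree ≤ q →
      ∑ i, ω i * MvPolynomial.eval (fun j => x i j) r = 0) :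
    |∑ i, ω i * f (x i)| ≤ C_f * Metric.diam τ ^ α * Real.sqrt m := by
  have hdiam0 : 0 ≤ Metric.diam τ := Metric.diam_nonneg
  have hbound : ∀ i : Fin m,
      |f (x i) - MvPolynomial.eval (fun j => x i j) p|
        ≤ C_f * Metric.diam τ ^ α := by
    intro i
    refine (hjaffard (x i) (hx i)).trans ?_
    have hd : ‖x i - x₀‖ ≤ Metric.diam τ := by
      rw [← dist_eq_norm]
      exact Metric.dist_le_diam_of_mem hτ (hx i) hx₀
    exact mul_le_mul_of_nonneg_left
      (Real.rpow_le_rpow (norm_nonneg _) hd hα) hC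
  have hkey : ∑ i, ω i * f (x i)
      = ∑ i, ω i * (f (x i) - MvPolynomial.eval (fun j => x i j) p) := by
    have := hvm p (hpdeg.trans hq)
    simp only [mul_sub, Finset.sum_sub_distrib, this, sub_zero]
  rw [hkey]
  calc |∑ i, ω i * (f (x i) - MvPolynomial.eval (fun j => x i j) p)|
      ≤ ∑ i, |ω i * (f (x i) - MvPolynomial.eval (fun j => x i j) p)| :=
        Finset.abs_sum_le_sum_abs _ _
    _ ≤ ∑ i : Fin m, |ω i| * (C_f * Metric.diam τ ^ α) := by
        refine Finset.sum_le_sum fun i _ => ?_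
        rw [abs_mul]
        exact mul_le_mul_of_nonneg_left (hbound i) (abs_nonneg _)
    _ = (∑ i, |ω i|) * (C_f * Metric.diam τ ^ α) := by
        rw [← Finset.sum_mul]
    _ ≤ Real.sqrt m * (C_f * Metric.diam τ ^ α) := by
        refine mul_le_mul_of_nonneg_right ?_
          (mul_nonneg hC (Real.rpow_nonneg hdiam0 α))
        have hcs := Finset.sum_mul_sq_le_sq_mul_sq Finset.univ
          (fun _ : Fin m => (1:ℝ)) (fun i => |ω i|)
        have hsum1 : ∑ i, ω i ^ 2 ≤ 1 := by
          have h0 : 0 ≤ ∑ i, ω i ^ 2 :=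
            Finset.sum_nonneg fun i _ => sq_nonneg _
          nlinarith [Real.sq_sqrt h0, Real.sqrt_nonneg (∑ i, ω i ^ 2)]
        have habs : (∑ i : Fin m, |ω i|) ^ 2 ≤ (m : ℝ) := by
          have h2 : (∑ i : Fin m, |ω i| ^ 2) = ∑ i, ω i ^ 2 := by
            simp [sq_abs]
          simp only [one_mul, one_pow, Finset.sum_const, Finset.card_univ,
            Fintype.card_fin, nsmul_eq_mul, mul_one, h2] at hcs
          nlinarith
        exact (Real.le_sqrt (Finset.sum_nonneg fun i _ => abs_nonneg _) (Nat.cast_nonneg m)).mpr habs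
    _ = C_f * Metric.diam τ ^ α * Real.sqrt m := by ring
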